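/- arXiv:1009.5999 — 6 statements merged into one kernel-verified Lean document; each statement's English description precedes it below -/
import Mathlib

section
/- Let V be a finite-dimensional real vector space with a nondegenerate symmetric bilinear form G, W ⊆ V a subspace, and F an alternating bilinear form on W. Call (u,v) with u ∈ W, v ∈ V an 'allowed pair' if G(v,w) = F(u,w) for all w ∈ W. If G(u,u) = -G(v,v) holds for all allowed pairs (u,v), then W⊥ ⊆ W, i.e. W is coisotropic with respect to G. -/
namespace LinearMap.BilinForm

lemma IsSymm.le_orthogonal_of_forall_self_eq_zero {K M : Type*} [Field K] [NeZero (2 : K)]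
    [AddCommGroup M] [Module K M] {B : LinearMap.BilinForm K M} (hB : B.IsSymm) {N : Submodule K M}
    (h : ∀ x ∈ N, B x x = 0) : N ≤ B.orthogonal N := by
  intro x hx
  rw [mem_orthogonal_iff]
  intro y hy
  change B y x = 0
  rw [hB.polarization, h _ (N.add_mem hy hx), h y hy, h x hx]
  simp

lemma orthogonal_le_of_forall_self_eq_zero {K V : Type*} [Field K] [NeZero (2 : K)]
    [AddCommGroup V] [Module K V] [FiniteDimensional K V] {B : LinearMap.BilinForm K V}
    (hnd : B.Nondegenerate) (hB : B.IsSymm) {W : Submodule K V}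
    (h : ∀ x ∈ B.orthogonal W, B x x = 0) : B.orthogonal W ≤ W :=
  calc B.orthogonal W ≤ B.orthogonal (B.orthogonal W) :=
        hB.le_orthogonal_of_forall_self_eq_zero h
    _ = W := orthogonal_orthogonal hnd hB.isRefl W

end LinearMap.BilinForm

theorem stmt1_general {V : Type*} [AddCommGroup V] [Module ℝ V] [FiniteDimensional ℝ V]
    (G : LinearMap.BilinForm ℝ V) (hGnd : G.Nondegenerate) (hGsymm : G.IsSymm)
    (W : Submodule ℝ V) (F : LinearMap.BilinForm ℝ W)
    (hconf : ∀ (u : W) (v : V), (∀ w : W, G v w = F u w) →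
      G (u : V) (u : V) = -G v v) :
    ∀ v : V, (∀ w ∈ W, G v w = 0) → v ∈ W := by
  have mem_orthogonal {x : V} : x ∈ G.orthogonal W ↔ ∀ w ∈ W, G x w = 0 := by
    simp only [LinearMap.BilinForm.mem_orthogonal_iff, hGsymm.isRefl.eq_iff]
  -- `(0, x)` is an allowed pair for every `x ∈ W⊥`, so `W⊥` consists of isotropic vectors.
  have isotropic : ∀ x ∈ G.orthogonal W, G x x = 0 := fun x hx => by
    simpa using (hconf 0 x fun w => by simp [mem_orthogonal.1 hx w w.2]).symm
  exact fun v hv =>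
    LinearMap.BilinForm.orthogonal_le_of_forall_self_eq_zero hGnd hGsymm isotropic
      (mem_orthogonal.2 hv)

/-- If `G(u,u) = -G(v,v)` for all allowed pairs `(u,v)`
(i.e. `u ∈ W`, `v ∈ V` with `G(v,·)|_W = F(u,·)|_W`), then `W` is coisotropic:
`W⊥ ⊆ W`. -/
theorem stmt1 {V : Type*} [AddCommGroup V] [Module ℝ V] [FiniteDimensional ℝ V]
    (G : LinearMap.BilinForm ℝ V) (hGnd : G.Nondegenerate) (hGsymm : G.IsSymm)
    (W : Submodule ℝ V) (F : LinearMap.BilinForm ℝ W) (hFalt : F.IsAlt)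
    (hconf : ∀ (u : W) (v : V), (∀ w : W, G v w = F u w) →
      G (u : V) (u : V) = -G v v) :
    ∀ v : V, (∀ w ∈ W, G v w = 0) → v ∈ W :=
  stmt1_general G hGnd hGsymm W F hconf
end

section
/- Let V be a finite-dimensional real vector space with a nondegenerate symmetric bilinear form G, W ⊆ V a subspace, F an alternating bilinear form on W, and call (u,v) an allowed pair if u ∈ W, v ∈ V, and G(v,w) = F(u,w) for all w ∈ W. If G(u,u) = -G(v,v) for every allowed pair (u,v), then for every allowed pair (u,v) one has v ∈ W. -/
/-!
If `(u, v)` is allowed and `v₀ ⊥ W`, then `(u, v + t • v₀)` is allowed for every `t`, so the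
hypothesis forces `G (v + t • v₀) (v + t • v₀) = -G u u = G v v`. Comparing `t = 1` and `t = -1`
gives `G v₀ v = 0`; hence `v ∈ (W⊥)⊥ = W` by nondegeneracy in finite dimension.
-/

namespace LinearMap.BilinForm

variable {K V : Type*} [Field K] [AddCommGroup V] [Module K V]

def IsAllowedPair (G : LinearMap.BilinForm K V) {W : Submodule K V}
    (F : LinearMap.BilinForm K W) (u : W) (v : V) : Prop :=
  ∀ w : W, G v w = F u w

theorem IsAllowedPair.add_smul_of_mem_orthogonal {G : LinearMap.BilinForm K V}
    {W : Submodule K V} {F : LinearMap.BilinForm K W} {u : W} {v v₀ : V}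
    (h : G.IsAllowedPair F u v) (hG : G.IsRefl) (hv₀ : v₀ ∈ G.orthogonal W) (t : K) :
    G.IsAllowedPair F u (v + t • v₀) := by
  intro w
  have hv₀w : G v₀ w = 0 := hG _ _ (hv₀ w w.2)
  simp [hv₀w, h w]

theorem IsSymm.apply_eq_zero_of_forall_apply_add_smul_self [NeZero (2 : K)]
    {G : LinearMap.BilinForm K V} (hG : G.IsSymm) {v v₀ : V}
    (h : ∀ t : K, G (v + t • v₀) (v + t • v₀) = G v v) : G v₀ v = 0 := by
  have h₁ := h 1
  have h₂ := h (-1)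
  simp only [one_smul, neg_one_smul, map_add, map_neg, LinearMap.add_apply,
    LinearMap.neg_apply] at h₁ h₂
  have hquad : (2 * 2 : K) * G v₀ v = 0 := by
    linear_combination h₁ - h₂ + 2 * hG.eq v₀ v
  simpa [two_ne_zero] using hquad

end LinearMap.BilinForm

theorem stmt2_general {V : Type*} [AddCommGroup V] [Module ℝ V] [FiniteDimensional ℝ V]
    (G : LinearMap.BilinForm ℝ V) (hGnd : G.Nondegenerate) (hGsymm : G.IsSymm)
    (W : Submodule ℝ V) (F : LinearMap.BilinForm ℝ W)
    (hconf : ∀ (u : W) (v : V), (∀ w : W, G v w = F u w) →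
      G (u : V) (u : V) = -G v v) :
    ∀ (u : W) (v : V), (∀ w : W, G v w = F u w) → v ∈ W := by
  intro u v huv
  have hGrefl : G.IsRefl := hGsymm.isRefl
  rw [← G.orthogonal_orthogonal hGnd hGrefl W, LinearMap.BilinForm.mem_orthogonal_iff]
  intro v₀ hv₀
  refine hGsymm.apply_eq_zero_of_forall_apply_add_smul_self fun t => ?_
  have hshifted : G.IsAllowedPair F u (v + t • v₀) :=
    LinearMap.BilinForm.IsAllowedPair.add_smul_of_mem_orthogonal huv hGrefl hv₀ t
  linarith [hconf u _ hshifted, hconf u v huv]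

/-- If `G(u,u) = -G(v,v)` for every allowed pair `(u,v)`, then for
every allowed pair `(u,v)` one has `v ∈ W`. -/
theorem stmt2 {V : Type*} [AddCommGroup V] [Module ℝ V] [FiniteDimensional ℝ V]
    (G : LinearMap.BilinForm ℝ V) (hGnd : G.Nondegenerate) (hGsymm : G.IsSymm)
    (W : Submodule ℝ V) (F : LinearMap.BilinForm ℝ W) (hFalt : F.IsAlt)
    (hconf : ∀ (u : W) (v : V), (∀ w : W, G v w = F u w) →
      G (u : V) (u : V) = -G v v) :
    ∀ (u : W) (v : V), (∀ w : W, G v w = F u w) → v ∈ W :=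
  stmt2_general G hGnd hGsymm W F hconf
end

section
/- Let V be a finite-dimensional real vector space with a nondegenerate symmetric bilinear form G, let W be a coisotropic subspace (W⊥ ⊆ W), and let F be an alternating bilinear form on W with ker F = W⊥ (i.e., F(u,w) = 0 for all w ∈ W iff u ∈ W⊥). Let S be a complement of W⊥ in W, so that G and F restrict to nondegenerate forms G̃, F̃ on S, and suppose (G̃⁻¹F̃)² = id on S. Then for every pair (u,v) with u ∈ W, v ∈ V and G(v,·)|_W = F(u,·)|_W, one has v ∈ W and G(u,·)|_W = F(v,·)|_W. -/
/- Both `G|_W` and `F` are reflexive forms on `W` whose radicals contain `W⊥`, so their values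
only depend on the components along the screen `S ⊕ W⊥ = W`. Testing `v` against `W⊥` gives
`G(v, W⊥) = F(u, W⊥) = 0`, hence `v ∈ W⊥⊥ = W`. On the screen, `G(v_S, ·) = F(u_S, ·) = G(R u_S, ·)`,
so `v_S = R u_S` by nondegeneracy of `G̃`, and then `R² = id` turns `F(v_S, ·) = G(R v_S, ·)` into
`G(u_S, ·)`. -/

open Module

/-- The `G`-orthogonal of a subspace `W`. -/
def orthSub {V : Type*} [AddCommGroup V] [Module ℝ V]
    (G : LinearMap.BilinForm ℝ V) (W : Submodule ℝ V) : Submodule ℝ V where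
  carrier := {v | ∀ w ∈ W, G v w = 0}
  zero_mem' := by intro w hw; simp
  add_mem' := by intro a b ha hb w hw; simp [ha w hw, hb w hw]
  smul_mem' := by intro c a ha w hw; simp [ha w hw]

theorem LinearMap.BilinForm.IsRefl.apply_eq_of_sub_mem {M : Type*} [AddCommGroup M] [Module ℝ M]
    {B : LinearMap.BilinForm ℝ M} (hB : B.IsRefl) {K : Submodule ℝ M}
    (hK : ∀ z ∈ K, ∀ y, B z y = 0) {x x' y y' : M} (hx : x - x' ∈ K) (hy : y - y' ∈ K) :
    B x y = B x' y' := by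
  have hxy : B (x - x') y = 0 := hK _ hx y
  have hx'y : B x' (y - y') = 0 := hB _ _ (hK _ hy x')
  rw [map_sub, LinearMap.sub_apply, sub_eq_zero] at hxy
  rw [map_sub, sub_eq_zero] at hx'y
  rw [hxy, hx'y]

section orthSub

variable {V : Type*} [AddCommGroup V] [Module ℝ V] {G : LinearMap.BilinForm ℝ V}

theorem orthSub_eq_orthogonal (hG : G.IsRefl) (U : Submodule ℝ V) :
    orthSub G U = G.orthogonal U := by
  ext x
  exact ⟨fun h w hw ↦ hG x w (h w hw), fun h w hw ↦ hG w x (h w hw)⟩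

theorem orthSub_orthSub [FiniteDimensional ℝ V] (hGnd : G.Nondegenerate) (hG : G.IsRefl)
    (W : Submodule ℝ V) : orthSub G (orthSub G W) = W := by
  rw [orthSub_eq_orthogonal hG, orthSub_eq_orthogonal hG, G.orthogonal_orthogonal hGnd hG]

end orthSub

theorem Submodule.exists_sub_mem_of_sup_eq {R M : Type*} [Ring R] [AddCommGroup M] [Module R M]
    {S T W : Submodule R M} (h : S ⊔ T = W) {x : M} (hx : x ∈ W) : ∃ s ∈ S, x - s ∈ T := by
  rw [← h] at hx
  obtain ⟨s, hs, t, ht, rfl⟩ := Submodule.mem_sup.mp hx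
  exact ⟨s, hs, by simpa using ht⟩

theorem stmt5_general {V : Type*} [AddCommGroup V] [Module ℝ V] [FiniteDimensional ℝ V]
    (G : LinearMap.BilinForm ℝ V) (hGnd : G.Nondegenerate) (hGsymm : G.IsSymm)
    (W : Submodule ℝ V) (hco : orthSub G W ≤ W)
    (F : LinearMap.BilinForm ℝ W) (hFalt : F.IsAlt)
    (hker : ∀ u : W, (∀ w : W, F u w = 0) ↔ (u : V) ∈ orthSub G W)
    (S : Submodule ℝ V) (hSle : S ≤ W)
    (hsup : S ⊔ orthSub G W = W)
    (hGS : ∀ x : S, (∀ y : S, G (x : V) (y : V) = 0) → x = 0)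
    (R : S →ₗ[ℝ] S)
    (hR : ∀ x y : S, F ⟨(x : V), hSle x.2⟩ ⟨(y : V), hSle y.2⟩ = G ((R x : S) : V) (y : V))
    (hR2 : ∀ x : S, R (R x) = x) :
    ∀ (u : W) (v : V), (∀ w : W, G v (w : V) = F u w) →
      ∃ hv : v ∈ W, ∀ w : W, G (u : V) (w : V) = F ⟨v, hv⟩ w := by
  intro u v huv
  set K := (orthSub G W).comap W.subtype
  have hGW : ∀ {x x' y y' : W}, x - x' ∈ K → y - y' ∈ K → G x y = G x' y' :=
    LinearMap.BilinForm.IsRefl.apply_eq_of_sub_mem (B := G.restrict W) (K := K)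
      (fun x y ↦ hGsymm.isRefl x y) fun z hz y ↦ hz y y.2
  have hFW : ∀ {x x' y y' : W}, x - x' ∈ K → y - y' ∈ K → F x y = F x' y' :=
    LinearMap.BilinForm.IsRefl.apply_eq_of_sub_mem (K := K) hFalt.isRefl fun z hz ↦ (hker z).mpr hz
  have hscreen (x : W) : ∃ s : S, x - ⟨s, hSle s.2⟩ ∈ K := by
    obtain ⟨s, hs, hxs⟩ := Submodule.exists_sub_mem_of_sup_eq hsup x.2
    exact ⟨⟨s, hs⟩, hxs⟩
  have hvW : v ∈ W := by
    rw [← orthSub_orthSub hGnd hGsymm.isRefl W]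
    intro z hz
    rw [huv ⟨z, hco hz⟩]
    exact hFalt.isRefl _ _ ((hker ⟨z, hco hz⟩).mpr hz u)
  refine ⟨hvW, fun w ↦ ?_⟩
  obtain ⟨uS, hu⟩ := hscreen u
  obtain ⟨vS, hv⟩ := hscreen ⟨v, hvW⟩
  obtain ⟨t, hw⟩ := hscreen w
  have hvS : vS = R uS := by
    rw [← sub_eq_zero]
    refine hGS _ fun y ↦ ?_
    have hy : (⟨y, hSle y.2⟩ : W) - ⟨y, hSle y.2⟩ ∈ K := by rw [sub_self]; exact zero_mem K
    rw [Submodule.coe_sub, map_sub, LinearMap.sub_apply, sub_eq_zero, ← hR, ← hFW hu hy,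
      ← huv, ← hGW hv hy]
  calc G (u : V) (w : V) = G (uS : V) (t : V) := hGW hu hw
    _ = F ⟨vS, hSle vS.2⟩ ⟨t, hSle t.2⟩ := by rw [hR, hvS, hR2]
    _ = F ⟨v, hvW⟩ w := (hFW hv hw).symm

/-- "if" direction of Proposition 3: if `W` is coisotropic, the
radical of `F` equals `W⊥`, and on a screen complement `S` of `W⊥` in `W` the
endomorphism `R = G̃⁻¹F̃` squares to the identity, then `(W,F)` satisfies the
topological bibrane condition. -/
theorem stmt5 {V : Type*} [AddCommGroup V] [Module ℝ V] [FiniteDimensional ℝ V]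
    (G : LinearMap.BilinForm ℝ V) (hGnd : G.Nondegenerate) (hGsymm : G.IsSymm)
    (W : Submodule ℝ V) (hco : orthSub G W ≤ W)
    (F : LinearMap.BilinForm ℝ W) (hFalt : F.IsAlt)
    (hker : ∀ u : W, (∀ w : W, F u w = 0) ↔ (u : V) ∈ orthSub G W)
    (S : Submodule ℝ V) (hSle : S ≤ W)
    (hdisj : S ⊓ orthSub G W = ⊥) (hsup : S ⊔ orthSub G W = W)
    (hGS : ∀ x : S, (∀ y : S, G (x : V) (y : V) = 0) → x = 0)
    (hFS : ∀ x : S, (∀ y : S, F ⟨(x : V), hSle x.2⟩ ⟨(y : V), hSle y.2⟩ = 0) → x = 0)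
    (R : S →ₗ[ℝ] S)
    (hR : ∀ x y : S, F ⟨(x : V), hSle x.2⟩ ⟨(y : V), hSle y.2⟩ = G ((R x : S) : V) (y : V))
    (hR2 : ∀ x : S, R (R x) = x) :
    ∀ (u : W) (v : V), (∀ w : W, G v (w : V) = F u w) →
      ∃ hv : v ∈ W, ∀ w : W, G (u : V) (w : V) = F ⟨v, hv⟩ w :=
  stmt5_general G hGnd hGsymm W hco F hFalt hker S hSle hsup hGS R hR hR2
end

section
/- Let V be a finite-dimensional real vector space with nondegenerate symmetric bilinear form G, W a subspace, F alternating on W. If for every pair (u,v) with u ∈ W, v ∈ V, G(v,·)|_W = F(u,·)|_W one has v ∈ W and G(u,·)|_W = F(v,·)|_W (topological bibrane condition), then the radical of F on W equals W⊥, i.e. {u ∈ W : F(u,w) = 0 ∀ w ∈ W} = W ∩ W⊥. -/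
open Module

def LinearMap.BilinForm.IsTopologicalBibrane {K V : Type*} [Field K] [AddCommGroup V]
    [Module K V] (G : LinearMap.BilinForm K V) (W : Submodule K V)
    (F : LinearMap.BilinForm K W) : Prop :=
  ∀ (u : W) (v : V), (∀ w : W, G v (w : V) = F u w) →
    ∃ hv : v ∈ W, ∀ w : W, G (u : V) (w : V) = F ⟨v, hv⟩ w

namespace LinearMap.BilinForm

variable {K V : Type*} [Field K] [AddCommGroup V] [Module K V]

theorem exists_forall_apply_eq_of_nondegenerate [FiniteDimensional K V]
    {G : LinearMap.BilinForm K V} (hG : G.Nondegenerate) {W : Submodule K V} (f : Dual K W) :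
    ∃ v : V, ∀ w : W, G v w = f w := by
  obtain ⟨g, hg⟩ := LinearMap.exists_extend f
  refine ⟨(G.toDual hG).symm g, fun w => ?_⟩
  rw [apply_toDual_symm_apply, ← hg]
  rfl

variable {G : LinearMap.BilinForm K V} {W : Submodule K V} {F : LinearMap.BilinForm K W}

theorem IsTopologicalBibrane.forall_apply_eq_zero_of_forall_eq_zero
    (hbib : G.IsTopologicalBibrane W F) {u : W} (hF : ∀ w : W, F u w = 0) :
    ∀ w ∈ W, G u w = 0 := by
  intro w hw
  obtain ⟨_, h⟩ := hbib u 0 fun w => by simp [hF w]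
  exact (h ⟨w, hw⟩).trans (F.map_zero₂ _)

/-- Represent `F(u,·)|_W` as `G(v,·)|_W`; the condition puts `v` in `W` with `F(v,·)|_W = 0`,
and applying the previous lemma to `v` gives `F(u,·)|_W = G(v,·)|_W = 0`. -/
theorem IsTopologicalBibrane.forall_eq_zero_of_forall_apply_eq_zero [FiniteDimensional K V]
    (hG : G.Nondegenerate) (hbib : G.IsTopologicalBibrane W F) {u : W}
    (hGu : ∀ w ∈ W, G u w = 0) : ∀ w : W, F u w = 0 := by
  obtain ⟨v, hv⟩ := exists_forall_apply_eq_of_nondegenerate hG (F u)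
  obtain ⟨hvW, hGF⟩ := hbib u v hv
  have hFv : ∀ w : W, F ⟨v, hvW⟩ w = 0 := fun w => by rw [← hGF w, hGu w w.2]
  intro w
  rw [← hv w]
  exact hbib.forall_apply_eq_zero_of_forall_eq_zero hFv w w.2

end LinearMap.BilinForm

open LinearMap.BilinForm

theorem stmt6_general {V : Type*} [AddCommGroup V] [Module ℝ V] [FiniteDimensional ℝ V]
    (G : LinearMap.BilinForm ℝ V) (hGnd : G.Nondegenerate)
    (W : Submodule ℝ V) (F : LinearMap.BilinForm ℝ W)
    (hbib : ∀ (u : W) (v : V), (∀ w : W, G v (w : V) = F u w) →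
      ∃ hv : v ∈ W, ∀ w : W, G (u : V) (w : V) = F ⟨v, hv⟩ w) :
    ∀ u : W, (∀ w : W, F u w = 0) ↔ (∀ w ∈ W, G (u : V) w = 0) :=
  fun _ => ⟨IsTopologicalBibrane.forall_apply_eq_zero_of_forall_eq_zero hbib,
    IsTopologicalBibrane.forall_eq_zero_of_forall_apply_eq_zero hGnd hbib⟩

/-- "only if" part of Proposition 3: under the topological
bibrane condition, the radical of `F` on `W` equals `W ∩ W⊥`: a vector `u ∈ W`
satisfies `F(u,·)|_W = 0` iff `G(u,·)|_W = 0`. -/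
theorem stmt6 {V : Type*} [AddCommGroup V] [Module ℝ V] [FiniteDimensional ℝ V]
    (G : LinearMap.BilinForm ℝ V) (hGnd : G.Nondegenerate) (hGsymm : G.IsSymm)
    (W : Submodule ℝ V) (F : LinearMap.BilinForm ℝ W) (hFalt : F.IsAlt)
    (hbib : ∀ (u : W) (v : V), (∀ w : W, G v (w : V) = F u w) →
      ∃ hv : v ∈ W, ∀ w : W, G (u : V) (w : V) = F ⟨v, hv⟩ w) :
    ∀ u : W, (∀ w : W, F u w = 0) ↔ (∀ w ∈ W, G (u : V) w = 0) :=
  stmt6_general G hGnd W F hbib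
end

section
/- Let V be a real vector space with a nondegenerate symmetric bilinear form G, and F a nondegenerate alternating form on V with R = G⁻¹F satisfying R² = id. Then the +1 and -1 eigenspaces V₊ and V₋ of R are both Lagrangian with respect to the symplectic form F: F vanishes identically on V₊ and on V₋, and V = V₊ ⊕ V₋. -/
/-!
If `R x = c • x` and `R y = c • y`, then `F x y = c G(x, y)` and `F y x = c G(y, x)`, so the
symmetry of `G` makes `F` symmetric on the pair, while `F` is antisymmetric; hence `F x y = 0`
as soon as `2` is invertible. The splitting comes from `R² = 1`:
`x = ½ (x + R x) + ½ (x - R x)`, with the two summands in `ker (R - 1)` and `ker (R + 1)`.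
-/

open Module

namespace Module.End

variable {K V : Type*} [Ring K] [AddCommGroup V] [Module K V]

theorem mem_ker_sub_one_iff {R : Module.End K V} {x : V} :
    x ∈ LinearMap.ker (R - 1) ↔ R x = x := by
  simp [sub_eq_zero]

theorem mem_ker_add_one_iff {R : Module.End K V} {x : V} :
    x ∈ LinearMap.ker (R + 1) ↔ R x = -x := by
  simp [add_eq_zero_iff_eq_neg]

theorem isCompl_ker_sub_one_ker_add_one [Invertible (2 : K)] {R : Module.End K V}
    (hR2 : R * R = 1) :
    IsCompl (LinearMap.ker (R - 1)) (LinearMap.ker (R + 1)) := by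
  have hRR (v : V) : R (R v) = v := by simpa using LinearMap.congr_fun hR2 v
  constructor
  · refine Submodule.disjoint_def.mpr fun x hplus hminus => ?_
    have hx : x = -x := (mem_ker_sub_one_iff.mp hplus).symm.trans (mem_ker_add_one_iff.mp hminus)
    have h2x : (2 : K) • x = 0 := by rw [two_smul]; nth_rewrite 1 [hx]; exact neg_add_cancel x
    simpa using congrArg (⅟(2 : K) • ·) h2x
  · refine Submodule.codisjoint_iff_exists_add_eq.mpr fun x =>
      ⟨⅟(2 : K) • (x + R x), ⅟(2 : K) • (x - R x), ?_, ?_, ?_⟩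
    · simp [hRR, add_comm]
    · simp [hRR]
    · rw [← smul_add, add_add_sub_cancel, ← two_smul K, smul_smul, invOf_mul_self, one_smul]

end Module.End

namespace LinearMap.BilinForm

variable {K V : Type*} [CommRing K] [AddCommGroup V] [Module K V]

theorem IsAlt.apply_eq_zero_of_eigenvectors [Invertible (2 : K)] {G F : LinearMap.BilinForm K V}
    (hG : G.IsSymm) (hF : F.IsAlt) {R : Module.End K V} (hR : ∀ x y, F x y = G (R x) y)
    {c : K} {x y : V} (hx : R x = c • x) (hy : R y = c • y) : F x y = 0 := by
  have hswap : F y x = F x y := by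
    rw [hR, hR, hx, hy, map_smul, map_smul, LinearMap.smul_apply, LinearMap.smul_apply, hG.eq]
  have h2 : (2 : K) * F x y = 0 := by
    linear_combination -(LinearMap.IsAlt.neg hF x y).trans hswap
  simpa using congrArg (⅟(2 : K) * ·) h2

end LinearMap.BilinForm

theorem stmt14_general {V : Type*} [AddCommGroup V] [Module ℝ V]
    (G : LinearMap.BilinForm ℝ V) (hGsymm : G.IsSymm)
    (F : LinearMap.BilinForm ℝ V) (hFalt : F.IsAlt)
    (R : Module.End ℝ V)
    (hR : ∀ x y : V, F x y = G (R x) y)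
    (hR2 : R * R = 1) :
    (∀ x ∈ LinearMap.ker (R - 1), ∀ y ∈ LinearMap.ker (R - 1), F x y = 0) ∧
    (∀ x ∈ LinearMap.ker (R + 1), ∀ y ∈ LinearMap.ker (R + 1), F x y = 0) ∧
    IsCompl (LinearMap.ker (R - 1)) (LinearMap.ker (R + 1)) := by
  refine ⟨fun x hx y hy => ?_, fun x hx y hy => ?_, End.isCompl_ker_sub_one_ker_add_one hR2⟩
  · exact hFalt.apply_eq_zero_of_eigenvectors hGsymm hR (c := 1)
      (by simpa using End.mem_ker_sub_one_iff.mp hx) (by simpa using End.mem_ker_sub_one_iff.mp hy)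
  · exact hFalt.apply_eq_zero_of_eigenvectors hGsymm hR (c := -1)
      (by simpa using End.mem_ker_add_one_iff.mp hx) (by simpa using End.mem_ker_add_one_iff.mp hy)

/-- with `F(x,y) = G(Rx,y)` nondegenerate alternating and
`R² = id`, the `±1` eigenspaces `V₊ = ker(R - 1)`, `V₋ = ker(R + 1)` are both
`F`-Lagrangian (`F` vanishes on each) and `V = V₊ ⊕ V₋`. -/
theorem stmt14 {V : Type*} [AddCommGroup V] [Module ℝ V] [FiniteDimensional ℝ V]
    (G : LinearMap.BilinForm ℝ V) (hGnd : G.Nondegenerate) (hGsymm : G.IsSymm)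
    (F : LinearMap.BilinForm ℝ V) (hFnd : F.Nondegenerate) (hFalt : F.IsAlt)
    (R : Module.End ℝ V)
    (hR : ∀ x y : V, F x y = G (R x) y)
    (hR2 : R * R = 1) :
    (∀ x ∈ LinearMap.ker (R - 1), ∀ y ∈ LinearMap.ker (R - 1), F x y = 0) ∧
    (∀ x ∈ LinearMap.ker (R + 1), ∀ y ∈ LinearMap.ker (R + 1), F x y = 0) ∧
    IsCompl (LinearMap.ker (R - 1)) (LinearMap.ker (R + 1)) :=
  stmt14_general G hGsymm F hFalt R hR hR2
end

section
/- Let g, ĝ be positive-definite symmetric n×n real matrices, b, b̂, f, f̂ antisymmetric n×n real matrices, and h ∈ GL(n,ℝ). Set G = diag(g, -ĝ) and F = -𝓕 - diag(b, -b̂) where 𝓕 has block form [[f, h], [-hᵀ, f̂]]. If (G⁻¹F)² = 1 (the space-filling topological defect condition), then ĝ = hᵀ( g - (b+f) g⁻¹ (b+f) )⁻¹ h and (b+f) g⁻¹ h + h ĝ⁻¹ (b̂ - f̂) = 0. -/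
/-!
Multiplying `(G⁻¹F)² = 1` on the left by `G` gives `F G⁻¹ F = G`, and `G⁻¹ = diag(g⁻¹, -ĝ⁻¹)`.
The `(1,1)` block of this identity reads `g - (b+f) g⁻¹ (b+f) = h ĝ⁻¹ hᵀ`, which can be solved
for `ĝ` since `h` is invertible; the `(1,2)` block is the second rule verbatim.
-/

open Matrix

namespace Matrix

variable {m n α : Type*} [Fintype m] [Fintype n] [CommRing α]

theorem fromBlocks_mul_fromBlocks_mul_fromBlocks (A : Matrix m m α) (B : Matrix m n α)
    (C : Matrix n m α) (D : Matrix n n α) (P : Matrix m m α) (Q : Matrix n n α) :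
    fromBlocks A B C D * fromBlocks P 0 0 Q * fromBlocks A B C D =
      fromBlocks (A * P * A + B * Q * C) (A * P * B + B * Q * D)
        (C * P * A + D * Q * C) (C * P * B + D * Q * D) := by
  simp [fromBlocks_multiply, Matrix.mul_assoc]

variable [DecidableEq m] [DecidableEq n]

theorem inv_neg (A : Matrix n n α) : (-A)⁻¹ = -A⁻¹ := by
  by_cases hA : IsUnit A
  · exact inv_eq_left_inv (by simp [nonsing_inv_mul A ((isUnit_iff_isUnit_det A).1 hA)])
  · simp only [nonsing_inv_eq_ringInverse, Ring.inverse_non_unit _ hA,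
      Ring.inverse_non_unit _ (mt (IsUnit.neg_iff A).1 hA), neg_zero]

theorem inv_fromBlocks_zero_zero {A : Matrix m m α} {D : Matrix n n α}
    (hAD : IsUnit A ↔ IsUnit D) : (fromBlocks A 0 0 D)⁻¹ = fromBlocks A⁻¹ 0 0 D⁻¹ := by
  simp [inv_fromBlocks_zero₂₁_of_isUnit_iff A 0 D hAD]

theorem mul_inv_mul_eq_of_sq_inv_mul_eq_one {G F : Matrix n n α} (hG : IsUnit G)
    (hsq : (G⁻¹ * F) ^ 2 = 1) : F * G⁻¹ * F = G := by
  calc F * G⁻¹ * F = G * (G⁻¹ * F) ^ 2 := by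
        simp [sq, Matrix.mul_assoc, mul_nonsing_inv_cancel_left _ _ ((isUnit_iff_isUnit_det G).1 hG)]
    _ = G := by rw [hsq, Matrix.mul_one]

theorem eq_mul_inv_mul_of_eq_mul_inv_mul {A K h k : Matrix n n α} (hA : IsUnit A) (hh : IsUnit h)
    (hk : IsUnit k) (hK : K = h * A⁻¹ * k) : A = k * K⁻¹ * h := by
  rw [hK, mul_inv_rev, mul_inv_rev, nonsing_inv_nonsing_inv _ ((isUnit_iff_isUnit_det A).1 hA)]
  simp only [← Matrix.mul_assoc, mul_nonsing_inv _ ((isUnit_iff_isUnit_det k).1 hk), Matrix.one_mul]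
  rw [Matrix.mul_assoc, nonsing_inv_mul _ ((isUnit_iff_isUnit_det h).1 hh), Matrix.mul_one]

end Matrix

theorem stmt19_general (n : ℕ)
    (g ghat b bhat f fhat h : Matrix (Fin n) (Fin n) ℝ)
    (hg : g.PosDef) (hghat : ghat.PosDef)
    (hh : IsUnit h)
    (G : Matrix (Fin n ⊕ Fin n) (Fin n ⊕ Fin n) ℝ)
    (hG : G = Matrix.fromBlocks g 0 0 (-ghat))
    (F : Matrix (Fin n ⊕ Fin n) (Fin n ⊕ Fin n) ℝ)
    (hF : F = -(Matrix.fromBlocks f h (-hᵀ) fhat) - Matrix.fromBlocks b 0 0 (-bhat))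
    (htop : (G⁻¹ * F) ^ 2 = 1) :
    ghat = hᵀ * (g - (b + f) * g⁻¹ * (b + f))⁻¹ * h ∧
      (b + f) * g⁻¹ * h + h * ghat⁻¹ * (bhat - fhat) = 0 := by
  have hGunit : IsUnit G := by
    rw [hG, isUnit_fromBlocks_zero₂₁]
    exact ⟨hg.isUnit, hghat.isUnit.neg⟩
  have hGinv : G⁻¹ = fromBlocks g⁻¹ 0 0 (-ghat⁻¹) := by
    rw [hG, inv_fromBlocks_zero_zero (iff_of_true hg.isUnit hghat.isUnit.neg), Matrix.inv_neg]
  have hFblocks : F = fromBlocks (-(b + f)) (-h) hᵀ (bhat - fhat) := by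
    simp only [hF, sub_eq_add_neg, fromBlocks_neg, fromBlocks_add]
    congr 1 <;> abel
  have hFGF := mul_inv_mul_eq_of_sq_inv_mul_eq_one hGunit htop
  rw [hGinv, hFblocks, fromBlocks_mul_fromBlocks_mul_fromBlocks, hG] at hFGF
  obtain ⟨h₁₁, h₁₂, -, -⟩ := fromBlocks_inj.1 hFGF
  constructor
  · refine eq_mul_inv_mul_of_eq_mul_inv_mul hghat.isUnit hh ((isUnit_transpose h).2 hh) ?_
    rw [sub_eq_iff_eq_add']
    refine h₁₁.symm.trans ?_
    noncomm_ring
  · refine Eq.trans ?_ h₁₂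
    noncomm_ring

/-- T-duality, section 7: for the space-filling defect on a
product of flat tori, the condition `(G⁻¹F)² = 1` implies the T-duality
transformation rules relating `(g,b)` and `(ghat,bhat)`. -/
theorem stmt19 (n : ℕ)
    (g ghat b bhat f fhat h : Matrix (Fin n) (Fin n) ℝ)
    (hg : g.PosDef) (hghat : ghat.PosDef)
    (hb : bᵀ = -b) (hbhat : bhatᵀ = -bhat) (hf : fᵀ = -f) (hfhat : fhatᵀ = -fhat)
    (hh : IsUnit h)
    (G : Matrix (Fin n ⊕ Fin n) (Fin n ⊕ Fin n) ℝ)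
    (hG : G = Matrix.fromBlocks g 0 0 (-ghat))
    (F : Matrix (Fin n ⊕ Fin n) (Fin n ⊕ Fin n) ℝ)
    (hF : F = -(Matrix.fromBlocks f h (-hᵀ) fhat) - Matrix.fromBlocks b 0 0 (-bhat))
    (htop : (G⁻¹ * F) ^ 2 = 1) :
    ghat = hᵀ * (g - (b + f) * g⁻¹ * (b + f))⁻¹ * h ∧
      (b + f) * g⁻¹ * h + h * ghat⁻¹ * (bhat - fhat) = 0 :=
  stmt19_general n g ghat b bhat f fhat h hg hghat hh G hG F hF htop
end
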